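/- arXiv:1601.02239 — 4 statements merged into one kernel-verified Lean document; each statement's English description precedes it below -/
import Mathlib

section
/- Let X be a Hilbert space and f : X → ℝ ∪ {+∞} be lower semicontinuous on X. If there exists φ̄ ∈ Φ_lsc with φ̄(x) < f(x) for all x, then f is Φ_lsc-convex, i.e. f(x) = sup{φ(x) : φ ∈ Φ_lsc, φ ≤ f} for all x ∈ X. -/
/-!
Given `r < f x₀`, lower semicontinuity gives a ball `B(x₀, δ)` on which `f > r`. The
concave paraboloid `x ↦ r - n‖x - x₀‖²` belongs to `Φ_lsc`, stays below `r` on the ball, and,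
since the minorant `φ̄` decays at most quadratically, lies below `φ̄ < f` off the ball once `n`
is large. So every real `r < f x₀` is the value at `x₀` of a `Φ_lsc`-support of `f`.
-/

def IsSupport {X : Type*} (Φ : Set (X → ℝ)) (f : X → EReal) (φ : X → ℝ) : Prop :=
  φ ∈ Φ ∧ ∀ x, (φ x : EReal) ≤ f x

def PhiConvex {X : Type*} (Φ : Set (X → ℝ)) (f : X → EReal) : Prop :=
  ∀ x, f x = ⨆ φ : {φ : X → ℝ // IsSupport Φ f φ}, ((φ : X → ℝ) x : EReal)

/-- The class `Φ_lsc` of quadratically shifted continuous affine functions: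
`x ↦ −a‖x‖² + ⟨ℓ, x⟩ + c` with `a ≥ 0`. -/
def PhiLsc (X : Type*) [NormedAddCommGroup X] [InnerProductSpace ℝ X] :
    Set (X → ℝ) :=
  {φ | ∃ (a : ℝ) (ℓ : X →L[ℝ] ℝ) (c : ℝ), 0 ≤ a ∧
    ∀ x, φ x = -a * ‖x‖ ^ 2 + ℓ x + c}

theorem phiConvex_of_forall_lt_exists_isSupport {X : Type*} {Φ : Set (X → ℝ)} {f : X → EReal}
    (h : ∀ x (r : ℝ), (r : EReal) < f x → ∃ φ, IsSupport Φ f φ ∧ r ≤ φ x) :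
    PhiConvex Φ f := by
  intro x
  refine le_antisymm (EReal.ge_of_forall_gt_iff_ge.1 fun r hr => ?_) (iSup_le fun φ => φ.2.2 x)
  obtain ⟨φ, hφ, hrφ⟩ := h x r hr
  exact (EReal.coe_le_coe_iff.2 hrφ).trans
    (le_iSup (fun ψ : {ψ : X → ℝ // IsSupport Φ f ψ} => ((ψ : X → ℝ) x : EReal)) ⟨φ, hφ⟩)

theorem exists_sub_mul_sq_le_of_le {A δ : ℝ} (hA : 0 ≤ A) (hδ : 0 < δ) (B r : ℝ) :
    ∃ n : ℝ, 0 ≤ n ∧ ∀ u, δ ≤ u → r - n * u ^ 2 ≤ -A * u ^ 2 - B := by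
  set C := max 0 (r + B)
  refine ⟨A + C / δ ^ 2, by positivity, fun u hu => ?_⟩
  have hδu : δ ^ 2 ≤ u ^ 2 := pow_le_pow_left₀ hδ.le hu 2
  have hC : C ≤ C / δ ^ 2 * u ^ 2 := by
    rw [div_mul_eq_mul_div, le_div_iff₀ (by positivity)]
    exact mul_le_mul_of_nonneg_left hδu (le_max_left _ _)
  nlinarith [le_max_right 0 (r + B)]

section PhiLsc

variable {X : Type*} [NormedAddCommGroup X] [InnerProductSpace ℝ X]

theorem exists_quadratic_lower_bound_of_mem_phiLsc {ψ : X → ℝ} (hψ : ψ ∈ PhiLsc X) (x₀ : X) :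
    ∃ A B : ℝ, 0 ≤ A ∧ ∀ x, -A * ‖x - x₀‖ ^ 2 - B ≤ ψ x := by
  obtain ⟨a, ℓ, c, ha, hψ⟩ := hψ
  set L := ‖ℓ‖
  refine ⟨2 * (a + L), 2 * (a + L) * ‖x₀‖ ^ 2 + L - c, by positivity, fun x => ?_⟩
  have hx : ‖x‖ ^ 2 ≤ 2 * ‖x - x₀‖ ^ 2 + 2 * ‖x₀‖ ^ 2 := by
    have := norm_sub_le (x - x₀) (-x₀)
    rw [sub_neg_eq_add, sub_add_cancel, norm_neg] at this
    nlinarith [norm_nonneg x, sq_nonneg (‖x - x₀‖ - ‖x₀‖)]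
  have hℓ : -(L * (1 + ‖x‖ ^ 2)) ≤ ℓ x := by
    have h1 : |ℓ x| ≤ L * ‖x‖ := ℓ.le_opNorm x
    have h2 : ‖x‖ ≤ 1 + ‖x‖ ^ 2 := by nlinarith [sq_nonneg (‖x‖ - 1)]
    nlinarith [neg_abs_le (ℓ x), norm_nonneg ℓ]
  rw [hψ x]
  nlinarith [mul_le_mul_of_nonneg_left hx (add_nonneg ha (norm_nonneg ℓ))]

theorem sub_mul_norm_sub_sq_mem_phiLsc (r : ℝ) {n : ℝ} (hn : 0 ≤ n) (x₀ : X) :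
    (fun x => r - n * ‖x - x₀‖ ^ 2) ∈ PhiLsc X := by
  refine ⟨n, (2 * n) • innerSL ℝ x₀, r - n * ‖x₀‖ ^ 2, hn, fun x => ?_⟩
  simp only [FunLike.coe_smul, Pi.smul_apply, innerSL_apply_apply, smul_eq_mul,
    norm_sub_sq_real, real_inner_comm x₀ x]
  ring

theorem exists_isSupport_phiLsc_eq_of_lt {f : X → EReal} (hlsc : LowerSemicontinuous f)
    {ψ : X → ℝ} (hψ : IsSupport (PhiLsc X) f ψ) {x₀ : X} {r : ℝ} (hr : (r : EReal) < f x₀) :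
    ∃ φ, IsSupport (PhiLsc X) f φ ∧ φ x₀ = r := by
  obtain ⟨δ, hδ, hball⟩ := Metric.eventually_nhds_iff_ball.1 (hlsc x₀ r hr)
  obtain ⟨A, B, hA, hψA⟩ := exists_quadratic_lower_bound_of_mem_phiLsc hψ.1 x₀
  obtain ⟨n, hn, hfar⟩ := exists_sub_mul_sq_le_of_le hA hδ B r
  refine ⟨_, ⟨sub_mul_norm_sub_sq_mem_phiLsc r hn x₀, fun x => ?_⟩, by simp⟩
  rcases lt_or_ge ‖x - x₀‖ δ with hnear | hfar'
  · refine le_trans ?_ (hball x (by rwa [Metric.mem_ball, dist_eq_norm])).le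
    exact EReal.coe_le_coe_iff.2 (sub_le_self _ (by positivity))
  · exact (EReal.coe_le_coe_iff.2 ((hfar _ hfar').trans (hψA x))).trans (hψ.2 x)

end PhiLsc

theorem lsc_minorized_implies_phiLsc_convex_general
    {X : Type*} [NormedAddCommGroup X] [InnerProductSpace ℝ X]
    (f : X → EReal)
    (hlsc : LowerSemicontinuous f)
    (hminor : ∃ φ ∈ PhiLsc X, ∀ x, (φ x : EReal) < f x) :
    PhiConvex (PhiLsc X) f := by
  obtain ⟨ψ, hψ, hψf⟩ := hminor
  refine phiConvex_of_forall_lt_exists_isSupport fun x₀ r hr => ?_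
  obtain ⟨φ, hφ, hφr⟩ := exists_isSupport_phiLsc_eq_of_lt hlsc ⟨hψ, fun x => (hψf x).le⟩ hr
  exact ⟨φ, hφ, hφr.ge⟩

theorem lsc_minorized_implies_phiLsc_convex
    {X : Type*} [NormedAddCommGroup X] [InnerProductSpace ℝ X] [CompleteSpace X]
    (f : X → EReal) (hbot : ∀ x, f x ≠ ⊥)
    (hlsc : LowerSemicontinuous f)
    (hminor : ∃ φ ∈ PhiLsc X, ∀ x, (φ x : EReal) < f x) :
    PhiConvex (PhiLsc X) f :=
  lsc_minorized_implies_phiLsc_convex_general f hlsc hminor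
end

section
/- Let X be a Hilbert space and f : X → ℝ ∪ {+∞} a proper Φ_lsc-convex function. Then the set dom(∂_{Φ_lsc} f) := {x ∈ X : ∂_{Φ_lsc} f(x) ≠ ∅} is dense in dom(f). -/
def edom {X : Type*} (f : X → EReal) : Set X := {x | f x ≠ ⊤}

/-- The `Φ`-subdifferential of `f` at `x₀`. -/
def Subdiff {X : Type*} (Φ : Set (X → ℝ)) (f : X → EReal) (x₀ : X) :
    Set (X → ℝ) :=
  {φ | φ ∈ Φ ∧ ∀ x, ((φ x - φ x₀ : ℝ) : EReal) + f x₀ ≤ f x}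

/-!
Φ_lsc-convexity makes `f` lower semicontinuous and bounded below by some `φ₀ ∈ Φ_lsc`, so
`g = f - φ₀ + ‖·‖²` is lower semicontinuous and nonnegative. The Borwein–Preiss variational
principle with quadratic penalties then yields, arbitrarily close to any point of `dom g`, a point
`y` at which `g + ∑ μᵢ ‖· - xᵢ‖²` attains its minimum: the `xᵢ` are successive near-minimizers of
the partially penalized functions, the growing penalties make them a Cauchy sequence with limit
`y`, and lower semicontinuity passes the near-minimality to the limit. In a Hilbert space the
penalty equals `M ‖·‖² - 2 ⟪·, w⟫ + K`, so its negative lies in Φ_lsc and is a Φ_lsc-subgradient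
of `g` at `y`; adding back `φ₀ - ‖·‖²` gives one of `f`.
-/

open Filter Topology

theorem EReal.add_coe_le_add_coe_iff (a b : EReal) (s t : ℝ) :
    a + s ≤ b + t ↔ ((s - t : ℝ) : EReal) + a ≤ b := by
  generalize hu : s - t = u
  induction a using EReal.rec <;> induction b using EReal.rec <;> simp [← EReal.coe_add]
  constructor <;> intro h <;> linarith

theorem EReal.tendsto_const_add_coe {ι : Type*} {l : Filter ι} (e : EReal) {u : ι → ℝ} {s : ℝ}
    (hu : Tendsto u l (𝓝 s)) : Tendsto (fun i => e + (u i : EReal)) l (𝓝 (e + s)) :=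
  (EReal.continuousAt_add (Or.inr (EReal.coe_ne_bot s)) (Or.inr (EReal.coe_ne_top s))).tendsto.comp
    (tendsto_const_nhds.prodMk_nhds ((continuous_coe_real_ereal.tendsto s).comp hu))

theorem LowerSemicontinuous.add_coe {α : Type*} [TopologicalSpace α] {f : α → EReal}
    (hf : LowerSemicontinuous f) {q : α → ℝ} (hq : Continuous q) :
    LowerSemicontinuous fun x => f x + (q x : EReal) :=
  hf.add' (continuous_coe_real_ereal.comp hq).lowerSemicontinuous fun _ =>
    EReal.continuousAt_add (Or.inr (EReal.coe_ne_bot _)) (Or.inr (EReal.coe_ne_top _))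

theorem LowerSemicontinuous.le_of_tendsto {α β γ : Type*} [TopologicalSpace α]
    [LinearOrder γ] [TopologicalSpace γ] [OrderTopology γ] [DenselyOrdered γ]
    {h : α → γ} (hh : LowerSemicontinuous h) {l : Filter β} [l.NeBot] {p : β → α} {u : β → γ}
    {y : α} {c : γ} (hp : Tendsto p l (𝓝 y)) (hu : Tendsto u l (𝓝 c))
    (hle : ∀ᶠ k in l, h (p k) ≤ u k) : h y ≤ c :=
  le_of_forall_lt_imp_le_of_dense fun z hz =>
    ge_of_tendsto hu (((hp.eventually (hh y z hz)).and hle).mono fun _ hk => hk.1.le.trans hk.2)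

theorem exists_forall_le_add_coe {α : Type*} {h : α → EReal} {b : ℝ}
    (hb : ∀ x, (b : EReal) ≤ h x) {x₀ : α} (hx₀ : h x₀ ≠ ⊤) {δ : ℝ} (hδ : 0 < δ) :
    ∃ z, ∀ x, h z ≤ h x + δ := by
  obtain ⟨m, hm⟩ : ∃ m : ℝ, ⨅ x, h x = m :=
    ⟨_, (EReal.coe_toReal (ne_top_of_le_ne_top hx₀ (iInf_le h x₀))
      (ne_bot_of_le_ne_bot (EReal.coe_ne_bot b) (le_iInf hb))).symm⟩
  have hlt : ⨅ x, h x < (m : EReal) + δ := by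
    rw [hm]; exact_mod_cast lt_add_of_pos_right m hδ
  obtain ⟨z, hz⟩ := iInf_lt_iff.1 hlt
  exact ⟨z, fun x => hz.le.trans (by rw [← hm]; gcongr; exact iInf_le h x)⟩

theorem le_of_tendsto_nearMin {α : Type*} [TopologicalSpace α] {H : ℕ → α → EReal}
    {G : α → EReal} (hH : ∀ n, LowerSemicontinuous (H n)) (hmono : Monotone H)
    (hG : ∀ x, Tendsto (H · x) atTop (𝓝 (G x))) {p : ℕ → α} {y : α}
    (hp : Tendsto p atTop (𝓝 y)) {δ : ℕ → ℝ} (hδ : Tendsto δ atTop (𝓝 0))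
    (hnear : ∀ n x, H n (p n) ≤ H n x + δ n) (x : α) : G y ≤ G x := by
  have hHG n x : H n x ≤ G x :=
    Monotone.ge_of_tendsto (f := (H · x)) (fun _ _ h => hmono h x) (hG x) n
  refine le_of_tendsto' (hG y) fun n =>
    (hH n).le_of_tendsto (u := fun k => G x + δ k) hp ?_ ?_
  · simpa using EReal.tendsto_const_add_coe (G x) hδ
  · filter_upwards [eventually_ge_atTop n] with k hk
    exact (hmono hk _).trans ((hnear k x).trans (by gcongr; exact hHG k x))

section PhiConvex

variable {X : Type*} {Φ : Set (X → ℝ)} {f : X → EReal}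

theorem PhiConvex.lowerSemicontinuous [TopologicalSpace X] (hΦ : ∀ φ ∈ Φ, Continuous φ)
    (hf : PhiConvex Φ f) : LowerSemicontinuous f := by
  rw [show f = _ from funext hf]
  exact lowerSemicontinuous_iSup fun φ =>
    (continuous_coe_real_ereal.comp (hΦ φ φ.2.1)).lowerSemicontinuous

theorem PhiConvex.exists_isSupport (hf : PhiConvex Φ f) {x : X} (hx : f x ≠ ⊥) :
    ∃ φ, IsSupport Φ f φ := by
  by_contra! h
  have : IsEmpty {φ : X → ℝ // IsSupport Φ f φ} := ⟨fun φ => h φ φ.2⟩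
  exact hx (by rw [hf x, iSup_of_empty])

theorem add_mem_subdiff_of_mem_subdiff_add_coe_neg {φ ψ : X → ℝ} {y : X}
    (hφ : φ ∈ Subdiff Φ (fun x => f x + ((-ψ x : ℝ) : EReal)) y) (hφψ : φ + ψ ∈ Φ) :
    φ + ψ ∈ Subdiff Φ f y := by
  refine ⟨hφψ, fun x => ?_⟩
  have h := hφ.2 x
  rw [← add_assoc, add_comm _ (f y), add_assoc, ← EReal.coe_add,
    EReal.add_coe_le_add_coe_iff] at h
  convert h using 3
  simp only [Pi.add_apply]
  ring

theorem neg_mem_subdiff_of_forall_add_coe_le {S : X → ℝ} {y : X} (hS : -S ∈ Φ)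
    (h : ∀ x, f y + (S y : EReal) ≤ f x + (S x : EReal)) : -S ∈ Subdiff Φ f y := by
  refine ⟨hS, fun x => ?_⟩
  convert (EReal.add_coe_le_add_coe_iff _ _ _ _).1 (h x) using 3
  simp only [Pi.neg_apply]
  ring

end PhiConvex

section PhiLsc

variable {X : Type*} [NormedAddCommGroup X] [InnerProductSpace ℝ X]

theorem continuous_of_mem_phiLsc {φ : X → ℝ} (hφ : φ ∈ PhiLsc X) : Continuous φ := by
  obtain ⟨a, ℓ, c, -, h⟩ := hφ
  rw [show φ = _ from funext h]
  fun_prop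

theorem add_mem_phiLsc {φ ψ : X → ℝ} (hφ : φ ∈ PhiLsc X) (hψ : ψ ∈ PhiLsc X) :
    φ + ψ ∈ PhiLsc X := by
  obtain ⟨a, ℓ, c, ha, h⟩ := hφ
  obtain ⟨a', ℓ', c', ha', h'⟩ := hψ
  exact ⟨a + a', ℓ + ℓ', c + c', add_nonneg ha ha', fun x => by
    simp only [Pi.add_apply, h, h', _root_.add_apply]; ring⟩

theorem neg_sq_norm_mem_phiLsc : (fun x : X => -‖x‖ ^ 2) ∈ PhiLsc X :=
  ⟨1, 0, 0, zero_le_one, fun x => by simp⟩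

theorem hasSum_mul_norm_sub_sq {μ : ℕ → ℝ} {p : ℕ → X} {M K : ℝ} {w : X} (hM : HasSum μ M)
    (hw : HasSum (fun i => μ i • p i) w) (hK : HasSum (fun i => μ i * ‖p i‖ ^ 2) K) (x : X) :
    HasSum (fun i => μ i * ‖x - p i‖ ^ 2) (M * ‖x‖ ^ 2 - 2 * inner ℝ x w + K) := by
  have hinner := ((innerSL ℝ x).hasSum hw).mul_left 2
  rw [innerSL_apply_apply] at hinner
  refine (((hM.mul_right (‖x‖ ^ 2)).sub hinner).add hK).congr_fun fun i => ?_
  simp only [innerSL_apply_apply, real_inner_smul_right, norm_sub_sq_real]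
  ring

theorem exists_neg_mem_phiLsc_hasSum_mul_norm_sub_sq [CompleteSpace X] {μ : ℕ → ℝ}
    (hμ : ∀ i, 0 ≤ μ i) (hμs : Summable μ) {p : ℕ → X} (hp : Bornology.IsBounded (Set.range p)) :
    ∃ S : X → ℝ, -S ∈ PhiLsc X ∧ ∀ x, HasSum (fun i => μ i * ‖x - p i‖ ^ 2) (S x) := by
  obtain ⟨R, hR⟩ := isBounded_iff_forall_norm_le.1 hp
  have hpR i : ‖p i‖ ≤ R := hR _ ⟨i, rfl⟩
  have hw : Summable fun i => μ i • p i := (hμs.mul_right R).of_norm_bounded fun i => by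
    rw [norm_smul, Real.norm_of_nonneg (hμ i)]; exact mul_le_mul_of_nonneg_left (hpR i) (hμ i)
  have hK : Summable fun i => μ i * ‖p i‖ ^ 2 :=
    (hμs.mul_right (R ^ 2)).of_nonneg_of_le (fun i => mul_nonneg (hμ i) (sq_nonneg _)) fun i =>
      mul_le_mul_of_nonneg_left (pow_le_pow_left₀ (norm_nonneg _) (hpR i) 2) (hμ i)
  refine ⟨_, ⟨∑' i, μ i, 2 • innerSL ℝ (∑' i, μ i • p i), -∑' i, μ i * ‖p i‖ ^ 2,
    tsum_nonneg hμ, fun x => ?_⟩, hasSum_mul_norm_sub_sq hμs.hasSum hw.hasSum hK.hasSum⟩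
  simp only [Pi.neg_apply, _root_.smul_apply, innerSL_apply_apply, real_inner_comm x]
  ring

end PhiLsc

namespace BorweinPreiss

variable {X : Type*} [SeminormedAddCommGroup X] {g : X → EReal} {x₀ : X} {μ δ : ℕ → ℝ}

def penalty (μ : ℕ → ℝ) (p : ℕ → X) (n : ℕ) (x : X) : ℝ :=
  ∑ i ∈ Finset.range n, μ i * ‖x - p i‖ ^ 2

def IsNearMinSeq (g : X → EReal) (μ δ : ℕ → ℝ) (p : ℕ → X) : Prop :=
  ∀ n x, g (p n) + (penalty μ p n (p n) : EReal) ≤ g x + (penalty μ p n x : EReal) + (δ n : EReal)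

-- The state is the current point together with the penalty accumulated so far.
noncomputable def seq (g : X → EReal) (x₀ : X) (μ δ : ℕ → ℝ) : ℕ → X × (X → ℝ)
  | 0 => (x₀, 0)
  | n + 1 =>
    let S : X → ℝ := fun x => (seq g x₀ μ δ n).2 x + μ n * ‖x - (seq g x₀ μ δ n).1‖ ^ 2
    (Classical.epsilon fun z => ∀ x, g z + (S z : EReal) ≤ g x + (S x : EReal) + (δ (n + 1) : EReal),
      S)

noncomputable def point (g : X → EReal) (x₀ : X) (μ δ : ℕ → ℝ) (n : ℕ) : X :=
  (seq g x₀ μ δ n).1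

theorem penalty_succ (μ : ℕ → ℝ) (p : ℕ → X) (n : ℕ) (x : X) :
    penalty μ p (n + 1) x = penalty μ p n x + μ n * ‖x - p n‖ ^ 2 :=
  Finset.sum_range_succ _ _

theorem penalty_nonneg (hμ : ∀ n, 0 ≤ μ n) (p : ℕ → X) (n : ℕ) (x : X) : 0 ≤ penalty μ p n x :=
  Finset.sum_nonneg fun i _ => mul_nonneg (hμ i) (sq_nonneg _)

theorem penalty_mono (hμ : ∀ n, 0 ≤ μ n) (p : ℕ → X) (x : X) : Monotone (penalty μ p · x) :=
  fun _ _ h => Finset.sum_le_sum_of_subset_of_nonneg (Finset.range_mono h) fun i _ _ =>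
    mul_nonneg (hμ i) (sq_nonneg _)

theorem seq_snd (g : X → EReal) (x₀ : X) (μ δ : ℕ → ℝ) (n : ℕ) :
    (seq g x₀ μ δ n).2 = penalty μ (point g x₀ μ δ) n := by
  induction n with
  | zero => funext x; simp [seq, penalty]
  | succ n ih => funext x; simp only [seq, penalty_succ, ← ih]; rfl

theorem point_succ_spec (n : ℕ)
    (h : ∃ z, ∀ x, g z + (penalty μ (point g x₀ μ δ) (n + 1) z : EReal) ≤
      g x + (penalty μ (point g x₀ μ δ) (n + 1) x : EReal) + (δ (n + 1) : EReal)) (x : X) :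
    g (point g x₀ μ δ (n + 1)) +
        (penalty μ (point g x₀ μ δ) (n + 1) (point g x₀ μ δ (n + 1)) : EReal) ≤
      g x + (penalty μ (point g x₀ μ δ) (n + 1) x : EReal) + (δ (n + 1) : EReal) := by
  have hpoint : point g x₀ μ δ (n + 1) = Classical.epsilon fun z => ∀ x,
      g z + (penalty μ (point g x₀ μ δ) (n + 1) z : EReal) ≤
        g x + (penalty μ (point g x₀ μ δ) (n + 1) x : EReal) + (δ (n + 1) : EReal) := by
    simp only [penalty_succ]
    rw [point, seq, seq_snd]
    rfl
  rw [hpoint]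
  exact Classical.epsilon_spec h x

theorem isNearMinSeq_point (hμ : ∀ n, 0 ≤ μ n) (hδ : ∀ n, 0 < δ n) {b : ℝ}
    (hb : ∀ x, (b : EReal) ≤ g x) (hx₀ : g x₀ ≤ ((b + δ 0 : ℝ) : EReal)) :
    IsNearMinSeq g μ δ (point g x₀ μ δ)
  | 0, x => by
    have : g x₀ ≤ g x + (δ 0 : EReal) :=
      hx₀.trans (by rw [EReal.coe_add]; exact add_le_add_left (hb x) _)
    simpa [penalty, point, seq] using this
  | n + 1, x => by
    refine point_succ_spec n ?_ x
    refine exists_forall_le_add_coe (x₀ := x₀) (fun z => (hb z).trans ?_) ?_ (hδ (n + 1))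
    · exact le_add_of_nonneg_right (EReal.coe_nonneg.2 (penalty_nonneg hμ _ _ _))
    · exact EReal.add_ne_top (ne_top_of_le_ne_top (EReal.coe_ne_top _) hx₀) (EReal.coe_ne_top _)

theorem IsNearMinSeq.ne_top {p : ℕ → X} (hp : IsNearMinSeq g μ δ p) (hx₀ : g x₀ ≠ ⊤) (n : ℕ) :
    g (p n) ≠ ⊤ := by
  intro htop
  have h := hp n x₀
  rw [htop, EReal.top_add_coe, top_le_iff] at h
  exact EReal.add_ne_top (EReal.add_ne_top hx₀ (EReal.coe_ne_top _)) (EReal.coe_ne_top _) h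

-- `pₙ₊₁` nearly minimizes the `(n+1)`-st penalized function, which agrees at `pₙ` with the
-- `n`-th one, nearly minimized by `pₙ`.
theorem IsNearMinSeq.mul_norm_sub_sq_le {p : ℕ → X} (hp : IsNearMinSeq g μ δ p) {b : ℝ}
    (hb : ∀ x, (b : EReal) ≤ g x) (hx₀ : g x₀ ≠ ⊤) (n : ℕ) :
    μ n * ‖p (n + 1) - p n‖ ^ 2 ≤ δ n + δ (n + 1) := by
  have hreal k : g (p k) = (g (p k)).toReal :=
    (EReal.coe_toReal (hp.ne_top hx₀ k) (ne_bot_of_le_ne_bot (EReal.coe_ne_bot b) (hb _))).symm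
  have h₁ := hp (n + 1) (p n)
  have h₂ := hp n (p (n + 1))
  rw [hreal n, hreal (n + 1)] at h₁ h₂
  norm_cast at h₁ h₂
  simp only [penalty_succ, sub_self, norm_zero] at h₁
  linarith

theorem le_geometric_of_weighted_sq_le {δ r d : ℝ} (hδ : 0 < δ) (hr : 0 < r) (hd : 0 ≤ d)
    (n : ℕ) (h : 8 * δ / r ^ 2 / 2 ^ n * d ^ 2 ≤ δ / 8 ^ n + δ / 8 ^ (n + 1)) :
    d ≤ r / 2 / 2 ^ n := by
  have ht : (0 : ℝ) < 2 ^ n := by positivity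
  rw [show (8 : ℝ) ^ (n + 1) = 8 * (2 ^ n) ^ 3 by rw [pow_succ, ← pow_mul, mul_comm n, pow_mul]; ring,
    show (8 : ℝ) ^ n = (2 ^ n) ^ 3 by rw [← pow_mul, mul_comm n, pow_mul]; norm_num] at h
  generalize (2 : ℝ) ^ n = t at h ht ⊢
  have key : 64 * t ^ 2 * d ^ 2 ≤ 9 * r ^ 2 := by
    have h' := mul_le_mul_of_nonneg_right h (by positivity : (0 : ℝ) ≤ 8 * r ^ 2 * t ^ 3)
    field_simp at h'
    nlinarith
  rw [← pow_le_pow_iff_left₀ hd (by positivity) two_ne_zero, div_div, div_pow,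
    le_div_iff₀ (by positivity)]
  nlinarith

end BorweinPreiss

open BorweinPreiss in
theorem exists_dist_le_subdiff_phiLsc_nonempty {X : Type*} [NormedAddCommGroup X]
    [InnerProductSpace ℝ X] [CompleteSpace X] {g : X → EReal} (hg : LowerSemicontinuous g)
    {b δ r : ℝ} (hb : ∀ x, (b : EReal) ≤ g x) {x₀ : X} (hx₀ : g x₀ ≤ ((b + δ : ℝ) : EReal))
    (hδ : 0 < δ) (hr : 0 < r) : ∃ y, dist x₀ y ≤ r ∧ (Subdiff (PhiLsc X) g y).Nonempty := by
  -- These weights and tolerances keep consecutive points within `r / 2 / 2 ^ n`.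
  let μ : ℕ → ℝ := fun i => 8 * δ / r ^ 2 / 2 ^ i
  let ε : ℕ → ℝ := fun i => δ / 8 ^ i
  let p := point g x₀ μ ε
  have hμ i : 0 ≤ μ i := by positivity
  have hp : IsNearMinSeq g μ ε p :=
    isNearMinSeq_point hμ (fun i => by positivity) hb (by simpa [ε] using hx₀)
  have hdist n : dist (p n) (p (n + 1)) ≤ r / 2 / 2 ^ n := by
    rw [dist_comm, dist_eq_norm]
    exact le_geometric_of_weighted_sq_le hδ hr (norm_nonneg _) n
      (hp.mul_norm_sub_sq_le hb (ne_top_of_le_ne_top (EReal.coe_ne_top _) hx₀) n)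
  obtain ⟨y, hy⟩ := cauchySeq_tendsto_of_complete (cauchySeq_of_le_geometric_two hdist)
  obtain ⟨S, hSΦ, hS⟩ := exists_neg_mem_phiLsc_hasSum_mul_norm_sub_sq hμ
    ((summable_geometric_two' (16 * δ / r ^ 2)).congr fun i => by ring)
    (Metric.isBounded_range_of_tendsto p hy)
  refine ⟨y, dist_le_of_le_geometric_two_of_tendsto₀ hdist hy, -S,
    neg_mem_subdiff_of_forall_add_coe_le hSΦ fun x => ?_⟩
  refine le_of_tendsto_nearMin (H := fun n x => g x + (penalty μ p n x : EReal))
    (fun n => hg.add_coe (by unfold penalty; fun_prop))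
    (fun m n hmn x => add_le_add_right (EReal.coe_le_coe_iff.2 (penalty_mono hμ p x hmn)) _)
    (fun x => EReal.tendsto_const_add_coe _ (hS x).tendsto_sum_nat) hy
    (tendsto_const_nhds.div_atTop (tendsto_pow_atTop_atTop_of_one_lt (by norm_num))) hp x

theorem dense_dom_subdiff_phiLsc_general
    {X : Type*} [NormedAddCommGroup X] [InnerProductSpace ℝ X] [CompleteSpace X]
    (f : X → EReal) (hbot : ∀ x, f x ≠ ⊥)
    (hconv : PhiConvex (PhiLsc X) f) :
    edom f ⊆ closure {x | (Subdiff (PhiLsc X) f x).Nonempty} := by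
  intro x₀ hx₀
  obtain ⟨φ₀, hφ₀, hφ₀f⟩ := hconv.exists_isSupport (hbot x₀)
  set ψ := φ₀ + fun x => -‖x‖ ^ 2
  have hψ : ψ ∈ PhiLsc X := add_mem_phiLsc hφ₀ neg_sq_norm_mem_phiLsc
  set g : X → EReal := fun x => f x + ((-ψ x : ℝ) : EReal)
  have hg : LowerSemicontinuous g :=
    (hconv.lowerSemicontinuous fun _ => continuous_of_mem_phiLsc).add_coe
      (continuous_of_mem_phiLsc hψ).neg
  -- `g ≥ φ₀ - ψ = ‖·‖²`
  have hg₀ x : ((0 : ℝ) : EReal) ≤ g x := by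
    refine le_trans ?_ (add_le_add_left (hφ₀f x) _)
    rw [← EReal.coe_add, EReal.coe_le_coe_iff]
    simp [ψ]
  have hgx₀ : g x₀ ≤ ((0 + ((g x₀).toReal + 1) : ℝ) : EReal) := by
    rw [zero_add, EReal.coe_add]
    exact (EReal.le_coe_toReal (EReal.add_ne_top hx₀ (EReal.coe_ne_top _))).trans
      (le_add_of_nonneg_right zero_le_one)
  rw [Metric.mem_closure_iff]
  intro ε hε
  obtain ⟨y, hy, φ, hφ⟩ := exists_dist_le_subdiff_phiLsc_nonempty hg hg₀ hgx₀
    (by linarith [EReal.toReal_nonneg (hg₀ x₀)]) (half_pos hε)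
  exact ⟨y, ⟨φ + ψ, add_mem_subdiff_of_mem_subdiff_add_coe_neg hφ (add_mem_phiLsc hφ.1 hψ)⟩,
    hy.trans_lt (half_lt_self hε)⟩

/-- The domain of the `Φ_lsc`-subdifferential is dense in the effective domain. -/
theorem dense_dom_subdiff_phiLsc
    {X : Type*} [NormedAddCommGroup X] [InnerProductSpace ℝ X] [CompleteSpace X]
    (f : X → EReal) (hbot : ∀ x, f x ≠ ⊥)
    (hconv : PhiConvex (PhiLsc X) f) (hproper : (edom f).Nonempty) :
    edom f ⊆ closure {x | (Subdiff (PhiLsc X) f x).Nonempty} :=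
  dense_dom_subdiff_phiLsc_general f hbot hconv
end

section
/- Let X = ℝ, f(x) = 2^x, g(x) = −|x| + 2, and α = 0. Then there exist φ₁ ∈ supp(f, Φ_lsc) and φ₂ ∈ supp(g, Φ_lsc) with the intersection property on ℝ at level 0, but there exist no x₁, x₂ ∈ ℝ and φ_f ∈ ∂_{Φ_lsc} f(x₁), φ_g ∈ ∂_{Φ_lsc} g(x₂) such that φ_f and φ_g have the intersection property on all of ℝ at level 0. -/
/-- `Φ_lsc` on `ℝ`: functions `x ↦ −a x² + b x + c` with `a ≥ 0`. -/
def PhiLscR : Set (ℝ → ℝ) :=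
  {φ | ∃ a b c : ℝ, 0 ≤ a ∧ ∀ x, φ x = -a * x ^ 2 + b * x + c}

def suppR (f : ℝ → ℝ) : Set (ℝ → ℝ) := {φ | φ ∈ PhiLscR ∧ ∀ x, φ x ≤ f x}

def SubdiffR (f : ℝ → ℝ) (x₀ : ℝ) : Set (ℝ → ℝ) :=
  {φ | φ ∈ PhiLscR ∧ ∀ x, φ x - φ x₀ ≤ f x - f x₀}

def IntersectionProperty (φ₁ φ₂ : ℝ → ℝ) (α : ℝ) : Prop :=
  {x | φ₁ x < α} ∩ {x | φ₂ x < α} = ∅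

/-- A concave quadratic with `a > 0`, or a linear function with positive slope,
is eventually negative as `x → -∞`. -/
lemma neg_far (a b c : ℝ) (h : 0 < a ∨ (a = 0 ∧ 0 < b)) :
    ∃ N : ℝ, ∀ x ≤ N, -a * x ^ 2 + b * x + c < 0 := by
  rcases h with ha | ⟨ha, hb⟩
  · refine ⟨-((|b| + |c|) / a) - 1, fun x hx => ?_⟩
    have h1 : (|b| + |c|) / a ≥ 0 := by positivity
    have hx1 : x ≤ -1 := by linarith
    have hx2 : a * x ≤ -(|b| + |c|) - a := by
      have := (div_le_iff₀ ha).mp (le_of_eq (rfl : (|b| + |c|) / a = (|b| + |c|) / a))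
      nlinarith [abs_nonneg b, abs_nonneg c]
    nlinarith [abs_nonneg b, abs_nonneg c, le_abs_self b, neg_abs_le b, le_abs_self c,
      neg_abs_le c, mul_le_mul_of_nonpos_right hx2 (by linarith : x ≤ 0)]
  · refine ⟨-c / b - 1, fun x hx => ?_⟩
    have h1 : b * x ≤ b * (-c / b - 1) := mul_le_mul_of_nonneg_left hx hb.le
    have hbc : b * (-c / b - 1) = -c - b := by field_simp
    rw [ha]
    nlinarith

theorem example_no_subgradient_intersection :
    (∃ φ₁ ∈ suppR (fun x => (2 : ℝ) ^ x),
      ∃ φ₂ ∈ suppR (fun x => -|x| + 2), IntersectionProperty φ₁ φ₂ 0) ∧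
    ¬ (∃ x₁ x₂ : ℝ, ∃ φf ∈ SubdiffR (fun x => (2 : ℝ) ^ x) x₁,
        ∃ φg ∈ SubdiffR (fun x => -|x| + 2) x₂,
          IntersectionProperty φf φg 0) := by
  constructor
  · refine ⟨fun _ => 0, ⟨⟨0, 0, 0, le_refl _, by intro x; ring⟩, fun x => ?_⟩,
      fun x => -x ^ 2, ⟨⟨1, 0, 0, zero_le_one, by intro x; ring⟩, fun x => ?_⟩, ?_⟩
    · positivity
    · show -x ^ 2 ≤ -|x| + 2
      nlinarith [sq_abs x, sq_nonneg (|x| - 1)]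
    · unfold IntersectionProperty
      ext x
      simp
  · rintro ⟨x₁, x₂, φf, ⟨⟨a, b, c, ha, hφf⟩, hf⟩, φg, ⟨⟨a', b', c', ha', hφg⟩, hg⟩, hI⟩
    -- φf is eventually negative at -∞
    have hfcase : 0 < a ∨ (a = 0 ∧ 0 < b) := by
      rcases lt_or_eq_of_le ha with h | h
      · exact Or.inl h
      · refine Or.inr ⟨h.symm, ?_⟩
        have := hf (x₁ - 1)
        rw [hφf (x₁ - 1), hφf x₁, ← h] at this
        have h2 : (2 : ℝ) ^ (x₁ - 1) - 2 ^ x₁ < 0 := by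
          have : (2 : ℝ) ^ (x₁ - 1) < 2 ^ x₁ := by
            apply Real.rpow_lt_rpow_left_iff (by norm_num : (1:ℝ) < 2) |>.mpr
            linarith
          linarith
        nlinarith
    -- φg must have a' > 0
    have hgcase : 0 < a' := by
      rcases lt_or_eq_of_le ha' with h | h
      · exact h
      · exfalso
        set t : ℝ := |x₂| + 1 with ht
        have ht0 : 0 < t := by positivity
        have h1 := hg (x₂ + t)
        have h2 := hg (x₂ - t)
        rw [hφg (x₂ + t), hφg x₂, ← h] at h1
        rw [hφg (x₂ - t), hφg x₂, ← h] at h2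
        have htri : 2 * t ≤ |x₂ + t| + |x₂ - t| := by
          have := abs_sub (x₂ + t) (x₂ - t)
          have h3 : |(x₂ + t) - (x₂ - t)| = 2 * t := by
            rw [show (x₂ + t) - (x₂ - t) = 2 * t by ring, abs_of_pos (by linarith)]
          calc 2 * t = |(x₂ + t) - (x₂ - t)| := h3.symm
            _ ≤ |x₂ + t| + |x₂ - t| := abs_sub _ _
        simp only at h1 h2
        have hx2 : |x₂| < t := by rw [ht]; linarith
        nlinarith
    obtain ⟨N₁, hN₁⟩ := neg_far a b c hfcase
    obtain ⟨N₂, hN₂⟩ := neg_far a' b' c' (Or.inl hgcase)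
    have hx : min N₁ N₂ ∈ ({x | φf x < 0} ∩ {x | φg x < 0}) := by
      constructor
      · show φf (min N₁ N₂) < 0
        rw [hφf]; exact hN₁ _ (min_le_left _ _)
      · show φg (min N₁ N₂) < 0
        rw [hφg]; exact hN₂ _ (min_le_right _ _)
    rw [IntersectionProperty] at hI
    rw [hI] at hx
    exact hx
end

section
/- Let X be a topological vector space, f : X → ℝ ∪ {+∞} proper, convex and continuous, α ∈ ℝ, and suppose {x : f(x) < α} ≠ ∅. Then for any x̄ with f(x̄) = α, the normal cone to the sublevel set {f ≤ α} at x̄ equals ℝ₊ ∂f(x̄), the set of nonnegative multiples of subgradients of f at x̄. -/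
/-- Convexity of an `ℝ ∪ {+∞}`-valued function. -/
def ERealConvexOn {X : Type*} [AddCommGroup X] [Module ℝ X] (f : X → EReal) : Prop :=
  ∀ x y : X, ∀ t : ℝ, 0 ≤ t → t ≤ 1 →
    f (t • x + (1 - t) • y) ≤ (t : EReal) * f x + ((1 - t : ℝ) : EReal) * f y

/-- Normal cone to `C` at `x̄`. -/
def NormalCone {X : Type*} [AddCommGroup X] [Module ℝ X] [TopologicalSpace X]
    (C : Set X) (xbar : X) : Set (X →L[ℝ] ℝ) :=
  {ℓ | ∀ x ∈ C, ℓ x ≤ ℓ xbar}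

/-- Subdifferential of `f : X → ℝ ∪ {+∞}` at `x̄` (where `f x̄` is finite). -/
def SubdiffE {X : Type*} [AddCommGroup X] [Module ℝ X] [TopologicalSpace X]
    (f : X → EReal) (xbar : X) : Set (X →L[ℝ] ℝ) :=
  {ℓ | ∀ x, ((ℓ x - ℓ xbar : ℝ) : EReal) + f xbar ≤ f x}

open Set Filter Topology ContinuousLinearMap

def strictEpigraph {X : Type*} (f : X → EReal) : Set (X × ℝ) := {p | f p.1 < p.2}

section Epigraph

variable {X : Type*} {f : X → EReal}

theorem isOpen_strictEpigraph [TopologicalSpace X] (hf : Continuous f) :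
    IsOpen (strictEpigraph f) :=
  isOpen_lt (hf.comp continuous_fst) (continuous_coe_real_ereal.comp continuous_snd)

theorem mem_closure_strictEpigraph [TopologicalSpace X] {x : X} {b : ℝ} (hx : f x = b) :
    (x, b) ∈ closure (strictEpigraph f) := by
  have hlim : Tendsto (fun r : ℝ => (x, r)) (𝓝[>] b) (𝓝 (x, b)) :=
    ((continuous_const.prodMk continuous_id).tendsto b).mono_left nhdsWithin_le_nhds
  refine mem_closure_of_tendsto hlim (eventually_nhdsWithin_of_forall fun r hr => ?_)
  simpa [strictEpigraph, hx] using hr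

theorem convex_strictEpigraph [AddCommGroup X] [Module ℝ X] (hbot : ∀ x, f x ≠ ⊥)
    (hconv : ERealConvexOn f) : Convex ℝ (strictEpigraph f) := by
  rintro ⟨x, r⟩ (hxr : f x < r) ⟨y, q⟩ (hyq : f y < q) a b ha hb hab
  obtain ⟨p, hp⟩ : ∃ p : ℝ, f x = p := ⟨_, (EReal.coe_toReal hxr.ne_top (hbot x)).symm⟩
  obtain ⟨p', hp'⟩ : ∃ p' : ℝ, f y = p' := ⟨_, (EReal.coe_toReal hyq.ne_top (hbot y)).symm⟩
  rw [hp, EReal.coe_lt_coe_iff] at hxr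
  rw [hp', EReal.coe_lt_coe_iff] at hyq
  have hcombo : a * p + b * p' < a * r + b * q := by
    rcases ha.eq_or_lt with rfl | ha
    · simpa [show b = 1 by linarith] using hyq
    · exact add_lt_add_of_lt_of_le (mul_lt_mul_of_pos_left hxr ha)
        (mul_le_mul_of_nonneg_left hyq.le hb)
  obtain rfl : b = 1 - a := by linarith
  calc f (a • x + (1 - a) • y) ≤ a * f x + ((1 - a : ℝ) : EReal) * f y :=
        hconv x y a ha (by linarith)
    _ = ((a * p + (1 - a) * p' : ℝ) : EReal) := by rw [hp, hp']; norm_cast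
    _ < ((a * r + (1 - a) * q : ℝ) : EReal) := EReal.coe_lt_coe hcombo

end Epigraph

theorem exists_nonneg_smul_eq_of_nonneg_imp_nonneg {𝕜 M : Type*} [Field 𝕜] [LinearOrder 𝕜]
    [IsStrictOrderedRing 𝕜] [AddCommGroup M] [Module 𝕜 M] (ℓ g : M →ₗ[𝕜] 𝕜)
    (h : ∀ d, 0 ≤ ℓ d → 0 ≤ g d) : ∃ c : 𝕜, 0 ≤ c ∧ g = c • ℓ := by
  have hker : ∀ d, ℓ d = 0 → g d = 0 := fun d hd =>
    le_antisymm (by simpa using h (-d) (by simp [hd])) (h d hd.ge)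
  rcases eq_or_ne ℓ 0 with rfl | hℓ
  · exact ⟨0, le_rfl, LinearMap.ext fun d => by simp [hker d rfl]⟩
  obtain ⟨w, hw⟩ := DFunLike.ne_iff.mp hℓ
  set v := (ℓ w)⁻¹ • w
  have hv : ℓ v = 1 := by simp [v, inv_mul_cancel₀ hw]
  refine ⟨g v, h v (by simp [hv]), LinearMap.ext fun d => ?_⟩
  have := hker (d - ℓ d • v) (by simp [hv])
  simp only [map_sub, map_smul, smul_eq_mul, sub_eq_zero] at this
  simp [this, mul_comm]

section Subdifferential

variable {X : Type*} [AddCommGroup X] [Module ℝ X] [TopologicalSpace X]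
  {f : X → EReal} {xbar : X} {α : ℝ}

theorem map_le_of_strictEpigraph_lt {φ : X × ℝ →L[ℝ] ℝ} {u : ℝ}
    (hE : ∀ p ∈ strictEpigraph f, φ p < u) {x : X} {b : ℝ} (hx : f x = b) : φ (x, b) ≤ u :=
  closure_minimal (fun p hp => (hE p hp).le) (isClosed_le φ.continuous continuous_const)
    (mem_closure_strictEpigraph hx)

theorem map_prod_eq_comp_inl_add_mul (φ : X × ℝ →L[ℝ] ℝ) (x : X) (r : ℝ) :
    φ (x, r) = φ.comp (inl ℝ X ℝ) x + r * φ (0, 1) := by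
  rw [← smul_eq_mul, ← map_smul, comp_apply, inl_apply, ← map_add]
  simp

theorem mem_subdiffE_of_strictEpigraph_lt (hbot : ∀ x, f x ≠ ⊥) (hx : f xbar = α)
    {φ : X × ℝ →L[ℝ] ℝ} {u : ℝ} (hE : ∀ p ∈ strictEpigraph f, φ p < u)
    (hu : u ≤ φ (xbar, α)) :
    φ (0, 1) < 0 ∧ (-φ (0, 1))⁻¹ • φ.comp (inl ℝ X ℝ) ∈ SubdiffE f xbar := by
  set s := φ (0, 1)
  have hs : s < 0 := by
    have := (hE (xbar, α + 1) (show f xbar < ((α + 1 : ℝ) : EReal) by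
      rw [hx]; exact_mod_cast lt_add_one α)).trans_le hu
    rw [map_prod_eq_comp_inl_add_mul, map_prod_eq_comp_inl_add_mul φ xbar α] at this
    linarith
  refine ⟨hs, fun x => ?_⟩
  rcases eq_or_ne (f x) ⊤ with htop | htop
  · simp [htop]
  obtain ⟨b, hb⟩ : ∃ b : ℝ, f x = b := ⟨_, (EReal.coe_toReal htop (hbot x)).symm⟩
  have hsep := (map_le_of_strictEpigraph_lt hE hb).trans hu
  rw [map_prod_eq_comp_inl_add_mul, map_prod_eq_comp_inl_add_mul φ xbar α] at hsep
  rw [hx, hb, ← EReal.coe_add, EReal.coe_le_coe_iff]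
  simp only [smul_apply, smul_eq_mul, ← mul_sub]
  have := (inv_mul_le_iff₀ (neg_pos.mpr hs)).mpr
    (show φ.comp (inl ℝ X ℝ) x - φ.comp (inl ℝ X ℝ) xbar ≤ -s * (b - α) by linarith)
  linarith

theorem smul_mem_normalCone_sublevel (hx : f xbar = α) {t : ℝ} (ht : 0 ≤ t)
    {ℓ₀ : X →L[ℝ] ℝ} (hℓ₀ : ℓ₀ ∈ SubdiffE f xbar) :
    t • ℓ₀ ∈ NormalCone {x | f x ≤ α} xbar := by
  intro x (hxα : f x ≤ α)
  have := (hℓ₀ x).trans hxα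
  rw [hx, ← EReal.coe_add, EReal.coe_le_coe_iff] at this
  simpa using mul_le_mul_of_nonneg_left (show ℓ₀ x ≤ ℓ₀ xbar by linarith) ht

theorem apply_lt_of_mem_normalCone [ContinuousAdd X] [ContinuousSMul ℝ X] {C U : Set X}
    {ℓ : X →L[ℝ] ℝ} (hℓ : ℓ ∈ NormalCone C xbar) (hℓ0 : ℓ ≠ 0) (hU : IsOpen U) (hUC : U ⊆ C) {x : X}
    (hx : x ∈ U) : ℓ x < ℓ xbar := by
  have himage : ∀ᶠ r in 𝓝 (ℓ x), r ∈ ℓ '' U :=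
    (ℓ.isOpenMap_of_ne_zero hℓ0 U hU).mem_nhds (mem_image_of_mem ℓ hx)
  obtain ⟨_, hr, y, hy, rfl⟩ := himage.exists_gt
  exact hr.trans_le (hℓ y (hUC hy))

end Subdifferential

section HahnBanach

variable {X : Type*} [AddCommGroup X] [Module ℝ X] [TopologicalSpace X]
  [IsTopologicalAddGroup X] [ContinuousSMul ℝ X] {f : X → EReal} {xbar : X} {α : ℝ}

theorem subdiffE_nonempty (hbot : ∀ x, f x ≠ ⊥) (hconv : ERealConvexOn f)
    (hcont : Continuous f) (hx : f xbar = α) : (SubdiffE f xbar).Nonempty := by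
  have hdisj : Disjoint (strictEpigraph f) {(xbar, α)} := by
    simp [strictEpigraph, hx]
  obtain ⟨φ, u, hE, hu⟩ := geometric_hahn_banach_open (convex_strictEpigraph hbot hconv)
    (isOpen_strictEpigraph hcont) (convex_singleton _) hdisj
  exact ⟨_, (mem_subdiffE_of_strictEpigraph_lt hbot hx hE (hu _ rfl)).2⟩

theorem exists_smul_mem_subdiffE_of_mem_normalCone (hbot : ∀ x, f x ≠ ⊥)
    (hconv : ERealConvexOn f) (hcont : Continuous f) (hne : {x | f x < α}.Nonempty)
    (hx : f xbar = α) {ℓ : X →L[ℝ] ℝ} (hℓ : ℓ ∈ NormalCone {x | f x ≤ α} xbar) (hℓ0 : ℓ ≠ 0) :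
    ∃ t : ℝ, 0 ≤ t ∧ ∃ ℓ₀ ∈ SubdiffE f xbar, ℓ = t • ℓ₀ := by
  set K : Set (X × ℝ) := {p | ℓ xbar ≤ ℓ p.1 ∧ p.2 ≤ α}
  have hKconv : Convex ℝ K :=
    (convex_halfSpace_ge (ℓ.comp (fst ℝ X ℝ)).toLinearMap.isLinear _).inter
      (convex_halfSpace_le (LinearMap.snd ℝ X ℝ).isLinear _)
  have hdisj : Disjoint (strictEpigraph f) K := by
    refine disjoint_left.mpr ?_
    rintro ⟨y, r⟩ (hyr : f y < r) ⟨hy, hr⟩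
    have hyα : f y < α := hyr.trans_le (EReal.coe_le_coe hr)
    exact (apply_lt_of_mem_normalCone hℓ hℓ0 (isOpen_lt hcont continuous_const)
      (fun z (hz : f z < α) => hz.le) hyα).not_ge hy
  obtain ⟨φ, u, hE, hK⟩ := geometric_hahn_banach_open (convex_strictEpigraph hbot hconv)
    (isOpen_strictEpigraph hcont) hKconv hdisj
  obtain ⟨hs, hℓ₀⟩ := mem_subdiffE_of_strictEpigraph_lt hbot hx hE (hK _ ⟨le_rfl, le_rfl⟩)
  set g := φ.comp (inl ℝ X ℝ)
  -- `φ` is maximal on the closed epigraph at `(xbar, α)`, and minimal there on `K`.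
  have hg : ∀ d, 0 ≤ ℓ d → 0 ≤ g d := by
    intro d hd
    have := (map_le_of_strictEpigraph_lt hE hx).trans (hK (xbar + d, α) ⟨by simpa, le_rfl⟩)
    rw [map_prod_eq_comp_inl_add_mul, map_prod_eq_comp_inl_add_mul φ _ α, map_add] at this
    linarith
  obtain ⟨c, hc, hgc⟩ :=
    exists_nonneg_smul_eq_of_nonneg_imp_nonneg ℓ.toLinearMap g.toLinearMap hg
  have hc0 : c ≠ 0 := by
    rintro rfl
    obtain ⟨x₀, hx₀ : f x₀ < α⟩ := hne
    have hg0 : ∀ d, g d = 0 := fun d => by simpa using LinearMap.congr_fun hgc d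
    have := hℓ₀ x₀
    simp only [smul_apply, hg0, smul_zero, sub_self, EReal.coe_zero, zero_add, hx] at this
    exact this.not_gt hx₀
  refine ⟨-φ (0, 1) / c, div_nonneg (neg_nonneg.mpr hs.le) hc, _, hℓ₀, ext fun d => ?_⟩
  have := LinearMap.congr_fun hgc d
  simp only [coe_coe, LinearMap.smul_apply, smul_eq_mul] at this
  simp only [smul_apply, smul_eq_mul, this]
  field_simp [hs.ne]

end HahnBanach

theorem normalCone_sublevel_eq_cone_subdiff_general
    {X : Type*} [AddCommGroup X] [Module ℝ X] [TopologicalSpace X]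
    [IsTopologicalAddGroup X] [ContinuousSMul ℝ X]
    (f : X → EReal) (hbot : ∀ x, f x ≠ ⊥)
    (hconv : ERealConvexOn f) (hcont : Continuous f)
    (α : ℝ) (hne : {x | f x < (α : EReal)}.Nonempty)
    (xbar : X) (hx : f xbar = (α : EReal)) :
    NormalCone {x | f x ≤ (α : EReal)} xbar =
      {ℓ | ∃ t : ℝ, 0 ≤ t ∧ ∃ ℓ₀ ∈ SubdiffE f xbar, ℓ = t • ℓ₀} := by
  ext ℓ
  refine ⟨fun hℓ => ?_, ?_⟩
  · rcases eq_or_ne ℓ 0 with rfl | hℓ0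
    · obtain ⟨ℓ₀, hℓ₀⟩ := subdiffE_nonempty hbot hconv hcont hx
      exact ⟨0, le_rfl, ℓ₀, hℓ₀, (zero_smul ℝ ℓ₀).symm⟩
    · exact exists_smul_mem_subdiffE_of_mem_normalCone hbot hconv hcont hne hx hℓ hℓ0
  · rintro ⟨t, ht, ℓ₀, hℓ₀, rfl⟩
    exact smul_mem_normalCone_sublevel hx ht hℓ₀

theorem normalCone_sublevel_eq_cone_subdiff
    {X : Type*} [AddCommGroup X] [Module ℝ X] [TopologicalSpace X]
    [IsTopologicalAddGroup X] [ContinuousSMul ℝ X]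
    (f : X → EReal) (hbot : ∀ x, f x ≠ ⊥) (hproper : (edom f).Nonempty)
    (hconv : ERealConvexOn f) (hcont : Continuous f)
    (α : ℝ) (hne : {x | f x < (α : EReal)}.Nonempty)
    (xbar : X) (hx : f xbar = (α : EReal)) :
    NormalCone {x | f x ≤ (α : EReal)} xbar =
      {ℓ | ∃ t : ℝ, 0 ≤ t ∧ ∃ ℓ₀ ∈ SubdiffE f xbar, ℓ = t • ℓ₀} :=
  normalCone_sublevel_eq_cone_subdiff_general f hbot hconv hcont α hne xbar hx
end
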